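/- arXiv:2411.18607 — 2 statements merged into one kernel-verified Lean document; each statement's English description precedes it below -/
import Mathlib

section
/- Under the hypotheses of the previous statement, if additionally each L_t is convex and H-smooth, then the data heterogeneity at the merged point vanishes: (1/T) Σ_{t=1}^T ‖∇L_t(θ_0 + λ Σ_s τ_s)‖² = 0, i.e., ∇L_t(θ_0 + λ Σ_s τ_s) = 0 for every t. -/
/-!
By convexity, the stationary point `θ0 + τ t` is a global minimizer of `L t`. The task arithmetic
property says the merged model predicts like `θ0 + τ t` almost surely under `D t`, so it has the
same loss and is a global minimizer as well; hence its gradient vanishes.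
-/

open MeasureTheory Set

section FirstOrder

variable {E : Type*} [NormedAddCommGroup E]

theorem ConvexOn.add_fderiv_sub_le [NormedSpace ℝ E] {s : Set E} {f : E → ℝ}
    {f' : E →L[ℝ] ℝ} {x y : E} (hf : ConvexOn ℝ s f) (hx : x ∈ s) (hy : y ∈ s)
    (hd : HasFDerivAt f f' x) : f x + f' (y - x) ≤ f y := by
  have hline : ConvexOn ℝ (AffineMap.lineMap (k := ℝ) x y ⁻¹' s) (f ∘ AffineMap.lineMap x y) :=
    hf.comp_affineMap _
  have hderiv : HasDerivAt (f ∘ AffineMap.lineMap (k := ℝ) x y) (f' (y - x)) 0 := by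
    have hd0 : HasFDerivAt f f' (AffineMap.lineMap x y (0 : ℝ)) := by
      rwa [AffineMap.lineMap_apply_zero]
    exact hd0.comp_hasDerivAt 0 AffineMap.hasDerivAt_lineMap
  have := hline.le_slope_of_hasDerivAt (x := (0 : ℝ)) (y := 1) (by simpa) (by simpa) one_pos hderiv
  simp only [slope_def_field, Function.comp_apply, AffineMap.lineMap_apply_zero,
    AffineMap.lineMap_apply_one, sub_zero, div_one] at this
  linarith

variable [InnerProductSpace ℝ E] [CompleteSpace E] {f : E → ℝ} {f' x : E}

theorem ConvexOn.isMinOn_of_hasGradientAt_zero {s : Set E} (hf : ConvexOn ℝ s f) (hx : x ∈ s)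
    (hd : HasGradientAt f 0 x) : IsMinOn f s x := fun y hy => by
  simpa using hf.add_fderiv_sub_le hx hy (hasGradientAt_iff_hasFDerivAt.mp hd)

theorem IsLocalMin.hasGradientAt_eq_zero (h : IsLocalMin f x) (hd : HasGradientAt f f' x) :
    f' = 0 := by
  simpa using h.hasFDerivAt_eq_zero (hasGradientAt_iff_hasFDerivAt.mp hd)

end FirstOrder

theorem task_arithmetic_property_implies_zero_heterogeneity_general
    {d T : ℕ}
    {X Y F : Type*} [MeasurableSpace X] [MeasurableSpace Y]
    (D : Fin T → Measure (X × Y))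
    (f : X → EuclideanSpace ℝ (Fin d) → F)
    (ℓ : F → Y → ℝ)
    (θ0 : EuclideanSpace ℝ (Fin d))
    (τ : Fin T → EuclideanSpace ℝ (Fin d))
    (lam : ℝ)
    (L : Fin T → EuclideanSpace ℝ (Fin d) → ℝ)
    (hL : ∀ t θ, L t θ = ∫ p, ℓ (f p.1 θ) p.2 ∂ (D t))
    (g : Fin T → EuclideanSpace ℝ (Fin d) → EuclideanSpace ℝ (Fin d))
    (hgrad : ∀ t θ, HasGradientAt (L t) (g t θ) θ)
    (hconv : ∀ t, ConvexOn ℝ Set.univ (L t))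
    (hTA : ∀ t, ∀ᵐ p ∂ (D t),
      f p.1 (θ0 + lam • ∑ s, τ s) = f p.1 (θ0 + τ t))
    (hopt : ∀ t, g t (θ0 + τ t) = 0) :
    (1 / (T : ℝ)) * ∑ t, ‖g t (θ0 + lam • ∑ s, τ s)‖ ^ 2 = 0 ∧
      ∀ t, g t (θ0 + lam • ∑ s, τ s) = 0 := by
  have hstationary : ∀ t, g t (θ0 + lam • ∑ s, τ s) = 0 := by
    intro t
    have hmin : IsMinOn (L t) univ (θ0 + τ t) :=
      (hconv t).isMinOn_of_hasGradientAt_zero (mem_univ _) (hopt t ▸ hgrad t _)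
    have hloss : L t (θ0 + lam • ∑ s, τ s) = L t (θ0 + τ t) := by
      rw [hL, hL]
      exact integral_congr_ae ((hTA t).mono fun p hp => by simp only [hp])
    have hmin' : IsMinOn (L t) univ (θ0 + lam • ∑ s, τ s) := fun y hy => hloss ▸ hmin hy
    exact (hmin'.isLocalMin Filter.univ_mem).hasGradientAt_eq_zero (hgrad t _)
  exact ⟨by simp [hstationary], hstationary⟩

/-- Under the Task Arithmetic property, with each `L t` convex and `H`-smooth and each
fine-tuned model stationary (`∇L_t(θ0 + τ_t) = 0`), the first-order data heterogeneity
at the merged point vanishes: `(1/T) Σ_t ‖∇L_t(θ0 + λ Σ_s τ_s)‖² = 0`, i.e. every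
`∇L_t(θ0 + λ Σ_s τ_s) = 0`. -/
theorem task_arithmetic_property_implies_zero_heterogeneity
    {d T : ℕ} (hT : 0 < T) (H : ℝ) (hH : 0 < H)
    {X Y F : Type*} [MeasurableSpace X] [MeasurableSpace Y]
    (D : Fin T → Measure (X × Y)) (hD : ∀ t, IsProbabilityMeasure (D t))
    (f : X → EuclideanSpace ℝ (Fin d) → F)
    (ℓ : F → Y → ℝ)
    (θ0 : EuclideanSpace ℝ (Fin d))
    (τ : Fin T → EuclideanSpace ℝ (Fin d))
    (lam : ℝ)
    (L : Fin T → EuclideanSpace ℝ (Fin d) → ℝ)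
    (hL : ∀ t θ, L t θ = ∫ p, ℓ (f p.1 θ) p.2 ∂ (D t))
    (g : Fin T → EuclideanSpace ℝ (Fin d) → EuclideanSpace ℝ (Fin d))
    (hgrad : ∀ t θ, HasGradientAt (L t) (g t θ) θ)
    (hconv : ∀ t, ConvexOn ℝ Set.univ (L t))
    (hsmooth : ∀ t θ φ, ‖g t θ - g t φ‖ ≤ H * ‖θ - φ‖)
    (hTA : ∀ t, ∀ᵐ p ∂ (D t),
      f p.1 (θ0 + lam • ∑ s, τ s) = f p.1 (θ0 + τ t))
    (hopt : ∀ t, g t (θ0 + τ t) = 0) :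
    (1 / (T : ℝ)) * ∑ t, ‖g t (θ0 + lam • ∑ s, τ s)‖ ^ 2 = 0 ∧
      ∀ t, g t (θ0 + lam • ∑ s, τ s) = 0 :=
  task_arithmetic_property_implies_zero_heterogeneity_general D f ℓ θ0 τ lam L hL g hgrad hconv hTA
    hopt
end

section
/- Let {L_t} and weights {w_t} satisfy bounded gradient heterogeneity with constants α, ζ. If E[‖∇L̃(θ)‖²] ≤ ε where L̃ = Σ_t w_t L_t, then the gradient of the uniform average L = (1/T) Σ_t L_t satisfies E[‖∇L(θ)‖²] ≤ 2[χ²_{p‖w}(α² − 1) + 1] ε + 2 χ²_{p‖w} ζ², where χ²_{p‖w} = Σ_t (1/T − w_t)²/w_t. In particular, if w_t = 1/T for all t then E[‖∇L(θ)‖²] ≤ ε (for α ≥ 1). -/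
/-!
Write `∇L = ∇L̃ + Σ_t (1/T - w_t) ∇L_t`. Since the coefficients `1/T - w_t` sum to zero, the
correction equals `Σ_t (1/T - w_t) (∇L_t - ∇L̃)`, and weighted Cauchy–Schwarz bounds its squared
norm by `χ²_{p‖w}` times the `w`-variance `Σ_t w_t ‖∇L_t‖² - ‖∇L̃‖²` of the gradients, which
heterogeneity bounds by `(α² - 1) ‖∇L̃‖² + ζ²`. Then `‖a + b‖² ≤ 2‖a‖² + 2‖b‖²`.
-/

open Finset

variable {ι E : Type*} [Fintype ι] [NormedAddCommGroup E] [InnerProductSpace ℝ E]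

noncomputable def chiSqDiv (p w : ι → ℝ) : ℝ :=
  ∑ t, (p t - w t) ^ 2 / w t

lemma chiSqDiv_nonneg {p w : ι → ℝ} (hw : ∀ t, 0 ≤ w t) : 0 ≤ chiSqDiv p w :=
  sum_nonneg fun t _ => div_nonneg (sq_nonneg _) (hw t)

lemma norm_sum_smul_sq_le {w : ι → ℝ} (hw : ∀ t, 0 < w t) (a : ι → ℝ) (v : ι → E) :
    ‖∑ t, a t • v t‖ ^ 2 ≤ (∑ t, a t ^ 2 / w t) * ∑ t, w t * ‖v t‖ ^ 2 := by
  have htri : ‖∑ t, a t • v t‖ ≤ ∑ t, |a t| * ‖v t‖ :=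
    (norm_sum_le _ _).trans_eq (by simp only [norm_smul, Real.norm_eq_abs])
  have hcs : (∑ t, |a t| * ‖v t‖) ^ 2 ≤ (∑ t, a t ^ 2 / w t) * ∑ t, w t * ‖v t‖ ^ 2 :=
    sum_sq_le_sum_mul_sum_of_sq_le_mul _
      (fun t _ => div_nonneg (sq_nonneg _) (hw t).le)
      (fun t _ => mul_nonneg (hw t).le (sq_nonneg _))
      (fun t _ => by field_simp [(hw t).ne']; rw [sq_abs, mul_comm])
  exact (pow_le_pow_left₀ (norm_nonneg _) htri 2).trans hcs

lemma sum_smul_sub_eq_of_sum_eq_zero {c : ι → ℝ} (hc : ∑ t, c t = 0) (v : ι → E) (x : E) :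
    ∑ t, c t • (v t - x) = ∑ t, c t • v t := by
  simp only [smul_sub, sum_sub_distrib, ← sum_smul, hc, zero_smul, sub_zero]

lemma sum_mul_norm_sub_sq_eq {w : ι → ℝ} (hw : ∑ t, w t = 1) (v : ι → E) :
    ∑ t, w t * ‖v t - ∑ s, w s • v s‖ ^ 2 = ∑ t, w t * ‖v t‖ ^ 2 - ‖∑ s, w s • v s‖ ^ 2 := by
  set G := ∑ s, w s • v s
  have hinner : ∑ t, w t * inner ℝ (v t) G = ‖G‖ ^ 2 := by
    simp only [← real_inner_smul_left, ← sum_inner, G, real_inner_self_eq_norm_sq]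
  simp only [norm_sub_sq_real, mul_add, mul_sub, sum_add_distrib, sum_sub_distrib,
    mul_left_comm _ (2 : ℝ), ← mul_sum, ← sum_mul, hinner, hw]
  ring

lemma norm_sum_smul_sub_sq_le_chiSqDiv_mul {p w : ι → ℝ} (hw : ∀ t, 0 < w t)
    (hpw : ∑ t, p t = ∑ t, w t) (hw1 : ∑ t, w t = 1) (v : ι → E) :
    ‖∑ t, p t • v t - ∑ t, w t • v t‖ ^ 2 ≤
      chiSqDiv p w * (∑ t, w t * ‖v t‖ ^ 2 - ‖∑ t, w t • v t‖ ^ 2) := by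
  have hc : ∑ t, (p t - w t) = 0 := by rw [sum_sub_distrib, hpw, sub_self]
  rw [← sum_sub_distrib]
  simp only [← sub_smul]
  rw [← sum_smul_sub_eq_of_sum_eq_zero hc v (∑ t, w t • v t), ← sum_mul_norm_sub_sq_eq hw1]
  exact norm_sum_smul_sq_le hw _ _

lemma norm_sum_smul_sq_le_of_heterogeneity {p w : ι → ℝ} (hw : ∀ t, 0 < w t)
    (hpw : ∑ t, p t = 1) (hw1 : ∑ t, w t = 1) {α ζ ε : ℝ} (hα : 1 ≤ α) {v : ι → E}
    (hhet : ∑ t, w t * ‖v t‖ ^ 2 ≤ α ^ 2 * ‖∑ t, w t • v t‖ ^ 2 + ζ ^ 2)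
    (hε : ‖∑ t, w t • v t‖ ^ 2 ≤ ε) :
    ‖∑ t, p t • v t‖ ^ 2 ≤
      2 * (chiSqDiv p w * (α ^ 2 - 1) + 1) * ε + 2 * chiSqDiv p w * ζ ^ 2 := by
  set G := ∑ t, w t • v t
  set D := ∑ t, p t • v t - G
  have hvar : ∑ t, w t * ‖v t‖ ^ 2 - ‖G‖ ^ 2 ≤ (α ^ 2 - 1) * ε + ζ ^ 2 := by
    have : 0 ≤ α ^ 2 - 1 := by nlinarith
    nlinarith
  have hD : ‖D‖ ^ 2 ≤ chiSqDiv p w * ((α ^ 2 - 1) * ε + ζ ^ 2) :=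
    (norm_sum_smul_sub_sq_le_chiSqDiv_mul hw (hpw.trans hw1.symm) hw1 v).trans
      (mul_le_mul_of_nonneg_left hvar (chiSqDiv_nonneg fun t => (hw t).le))
  calc ‖∑ t, p t • v t‖ ^ 2 = ‖G + D‖ ^ 2 := by rw [add_sub_cancel]
    _ ≤ (‖G‖ + ‖D‖) ^ 2 := pow_le_pow_left₀ (norm_nonneg _) (norm_add_le G D) 2
    _ ≤ 2 * (‖G‖ ^ 2 + ‖D‖ ^ 2) := add_sq_le
    _ ≤ 2 * (ε + chiSqDiv p w * ((α ^ 2 - 1) * ε + ζ ^ 2)) := by gcongr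
    _ = _ := by ring

theorem gradient_bound_transfer_under_heterogeneity_general
    {d T : ℕ} (hT : 0 < T) (α ζ ε : ℝ) (hα : 1 ≤ α)
    (g : Fin T → EuclideanSpace ℝ (Fin d) → EuclideanSpace ℝ (Fin d))
    (w : Fin T → ℝ) (hw : ∀ t, 0 < w t) (hwsum : ∑ t, w t = 1)
    (hhet : ∀ θ : EuclideanSpace ℝ (Fin d),
      ∑ t, w t * ‖g t θ‖ ^ 2 ≤ α ^ 2 * ‖∑ t, w t • g t θ‖ ^ 2 + ζ ^ 2)
    (θ : EuclideanSpace ℝ (Fin d))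
    (hLtilde : ‖∑ t, w t • g t θ‖ ^ 2 ≤ ε) :
    ‖(1 / (T : ℝ)) • ∑ t, g t θ‖ ^ 2 ≤
        2 * ((∑ t, (1 / (T : ℝ) - w t) ^ 2 / w t) * (α ^ 2 - 1) + 1) * ε
          + 2 * (∑ t, (1 / (T : ℝ) - w t) ^ 2 / w t) * ζ ^ 2 ∧
      ((∀ t, w t = 1 / T) → ‖(1 / (T : ℝ)) • ∑ t, g t θ‖ ^ 2 ≤ ε) := by
  have hp : ∑ _t : Fin T, 1 / (T : ℝ) = 1 := by
    simp [Finset.card_univ, hT.ne']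
  rw [smul_sum]
  refine ⟨norm_sum_smul_sq_le_of_heterogeneity hw hp hwsum hα (hhet θ) hLtilde, fun huni => ?_⟩
  simpa only [huni] using hLtilde

/-- Objective inconsistency transfer (deterministic version of Theorem 2 of
Wang et al.): under bounded gradient heterogeneity with constants `α ≥ 1`, `ζ ≥ 0`
for the weights `w`, if the gradient of `L̃ = Σ_t w_t L_t` satisfies
`‖∇L̃(θ)‖² ≤ ε`, then the gradient of the uniform average `L = (1/T) Σ_t L_t`
satisfies `‖∇L(θ)‖² ≤ 2[χ²_{p‖w}(α² - 1) + 1] ε + 2 χ²_{p‖w} ζ²`, where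
`χ²_{p‖w} = Σ_t (1/T - w_t)²/w_t`. In particular, with uniform weights `w_t = 1/T`
we get `‖∇L(θ)‖² ≤ ε`. -/
theorem gradient_bound_transfer_under_heterogeneity
    {d T : ℕ} (hT : 0 < T) (α ζ ε : ℝ) (hα : 1 ≤ α) (hζ : 0 ≤ ζ) (hε : 0 ≤ ε)
    (L : Fin T → EuclideanSpace ℝ (Fin d) → ℝ)
    (g : Fin T → EuclideanSpace ℝ (Fin d) → EuclideanSpace ℝ (Fin d))
    (hdiff : ∀ t θ, HasGradientAt (L t) (g t θ) θ)
    (w : Fin T → ℝ) (hw : ∀ t, 0 < w t) (hwsum : ∑ t, w t = 1)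
    (hhet : ∀ θ : EuclideanSpace ℝ (Fin d),
      ∑ t, w t * ‖g t θ‖ ^ 2 ≤ α ^ 2 * ‖∑ t, w t • g t θ‖ ^ 2 + ζ ^ 2)
    (θ : EuclideanSpace ℝ (Fin d))
    (hLtilde : ‖∑ t, w t • g t θ‖ ^ 2 ≤ ε) :
    ‖(1 / (T : ℝ)) • ∑ t, g t θ‖ ^ 2 ≤
        2 * ((∑ t, (1 / (T : ℝ) - w t) ^ 2 / w t) * (α ^ 2 - 1) + 1) * ε
          + 2 * (∑ t, (1 / (T : ℝ) - w t) ^ 2 / w t) * ζ ^ 2 ∧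
      ((∀ t, w t = 1 / T) → ‖(1 / (T : ℝ)) • ∑ t, g t θ‖ ^ 2 ≤ ε) :=
  gradient_bound_transfer_under_heterogeneity_general hT α ζ ε hα g w hw hwsum hhet θ hLtilde
end
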